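/- Let α ∈ (0,1) and set S_α = ∫_0^∞ u^{−1−α} sin(u) du and m(ξ) = sgn(ξ)|ξ|^α (with m(0)=0). Then for all ξ₁, ξ₂ ∈ ℝ, the bilinear symbol Ω(ξ₁,ξ₂) = ∫_ℝ sgn(y)|y|^{1−α} (e^{iξ₁y}−1)(e^{iξ₂y}−1)/y² dy satisfies Ω(ξ₁,ξ₂) = 2i·S_α·( m(ξ₁+ξ₂) − m(ξ₁) − m(ξ₂) ). In particular Ω is, up to a constant, the resonance function of the dispersion relation ω(ξ) = c·i·ξ|ξ|^{α−1}. -/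

import Mathlib

/-! With `K_ξ(y) = sgn y |y|^(-1-α) (e^{iξy} - 1)`, the identity
`(ab - 1) - (a - 1) - (b - 1) = (a - 1)(b - 1)` for `a = e^{iξ₁y}`, `b = e^{iξ₂y}` writes the
integrand as `K_{ξ₁+ξ₂} - K_{ξ₁} - K_{ξ₂}`. Each `K_ξ` is integrable since
`|e^{ix} - 1| ≤ min 2 |x|` and `0 < α < 1`, and pairing `y` with `-y` gives
`∫ K_ξ = 2i ∫₀^∞ y^(-1-α) sin(ξy) dy`, which the substitution `u = |ξ| y` turns into
`2i S sgn ξ |ξ|^α`. -/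

open MeasureTheory Set Complex

noncomputable def resonanceKernel (α ξ y : ℝ) : ℂ :=
  ((Real.sign y * |y| ^ (-1 - α) : ℝ) : ℂ) * (cexp (I * ξ * y) - 1)

theorem Real.measurable_sign : Measurable Real.sign :=
  Measurable.ite measurableSet_Iio measurable_const <|
    Measurable.ite measurableSet_Ioi measurable_const measurable_const

theorem Real.abs_sign_le_one (x : ℝ) : |Real.sign x| ≤ 1 := by
  rcases Real.sign_apply_eq x with h | h | h <;> simp [h]

theorem norm_cexp_I_mul_ofReal_sub_one_le_min (x : ℝ) :
    ‖cexp (I * x) - 1‖ ≤ min 2 |x| := by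
  refine le_min ?_ Real.norm_exp_I_mul_ofReal_sub_one_le
  calc ‖cexp (I * x) - 1‖ ≤ ‖cexp (I * x)‖ + ‖(1 : ℂ)‖ := norm_sub_le _ _
    _ = 2 := by rw [mul_comm, norm_exp_ofReal_mul_I]; norm_num

theorem MeasureTheory.IntegrableOn.integrable_comp_abs {E : Type*} [NormedAddCommGroup E]
    {f : ℝ → E} (hf : IntegrableOn f (Ioi 0)) : Integrable fun x => f |x| := by
  have hIoi : IntegrableOn (fun x => f |x|) (Ioi 0) :=
    hf.congr_fun (fun x hx => by rw [abs_of_pos (mem_Ioi.mp hx)]) measurableSet_Ioi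
  have hIic : IntegrableOn (fun x => f |x|) (Iic 0) := by
    have hneg : MeasurableEmbedding fun x : ℝ => -x := (Homeomorph.neg ℝ).measurableEmbedding
    rw [← Measure.map_neg_eq_self (volume : Measure ℝ), hneg.integrableOn_map_iff]
    simp_rw [Function.comp_def, abs_neg, neg_preimage, neg_Iic, neg_zero]
    exact Iff.mpr integrableOn_Ici_iff_integrableOn_Ioi hIoi
  simpa using hIic.union hIoi

theorem integral_eq_integral_Ioi_add_comp_neg {E : Type*} [NormedAddCommGroup E]
    [NormedSpace ℝ E] {f : ℝ → E} (hf : Integrable f) :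
    ∫ x, f x = ∫ x in Ioi 0, (f x + f (-x)) := by
  rw [integral_add hf.integrableOn hf.comp_neg.integrableOn, integral_comp_neg_Ioi, neg_zero,
    add_comm, intervalIntegral.integral_Iic_add_Ioi hf.integrableOn hf.integrableOn]

theorem integrableOn_Ioi_min_mul_rpow {s : ℝ} (hs : s ∈ Ioo (-2) (-1)) {A c : ℝ}
    (hA : 0 ≤ A) (hc : 0 ≤ c) :
    IntegrableOn (fun t : ℝ => min A (c * t) * t ^ s) (Ioi 0) := by
  have hmeas : AEStronglyMeasurable (fun t : ℝ => min A (c * t) * t ^ s) := by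
    fun_prop
  have hnorm : ∀ t ∈ Ioi (0 : ℝ), ‖min A (c * t) * t ^ s‖ = min A (c * t) * t ^ s := fun t ht =>
    Real.norm_of_nonneg <| mul_nonneg (le_min hA (mul_nonneg hc (le_of_lt ht)))
      (Real.rpow_nonneg (le_of_lt ht) _)
  have hnear : IntegrableOn (fun t : ℝ => min A (c * t) * t ^ s) (Ioc 0 1) := by
    have hpow : IntegrableOn (fun t : ℝ => c * t ^ (s + 1)) (Ioc 0 1) :=
      (intervalIntegral.intervalIntegrable_rpow' (a := 0) (b := 1)
        (by linarith [hs.1])).1.const_mul c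
    refine hpow.mono' hmeas.restrict ((ae_restrict_iff' measurableSet_Ioc).mpr
      (Filter.Eventually.of_forall fun t ht => ?_))
    calc ‖min A (c * t) * t ^ s‖ ≤ c * t * t ^ s := by
          rw [hnorm t ht.1]
          exact mul_le_mul_of_nonneg_right (min_le_right _ _) (Real.rpow_nonneg ht.1.le _)
      _ = c * t ^ (s + 1) := by rw [Real.rpow_add_one ht.1.ne']; ring
  have hfar : IntegrableOn (fun t : ℝ => min A (c * t) * t ^ s) (Ioi 1) := by
    refine ((integrableOn_Ioi_rpow_of_lt hs.2 one_pos).const_mul A).mono' hmeas.restrict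
      ((ae_restrict_iff' measurableSet_Ioi).mpr (Filter.Eventually.of_forall fun t ht => ?_))
    have ht0 : (0 : ℝ) < t := one_pos.trans ht
    rw [hnorm t ht0]
    exact mul_le_mul_of_nonneg_right (min_le_left _ _) (Real.rpow_nonneg ht0.le _)
  simpa [Ioc_union_Ioi_eq_Ioi zero_le_one] using hnear.union hfar

theorem norm_resonanceKernel_le (α ξ y : ℝ) :
    ‖resonanceKernel α ξ y‖ ≤ min 2 (|ξ| * |y|) * |y| ^ (-1 - α) := by
  have harg : I * ξ * y = I * ↑(ξ * y) := by push_cast; ring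
  rw [resonanceKernel, norm_mul, Complex.norm_real, Real.norm_eq_abs, abs_mul,
    abs_of_nonneg (Real.rpow_nonneg (abs_nonneg y) _), mul_comm, harg, ← abs_mul]
  gcongr
  · exact norm_cexp_I_mul_ofReal_sub_one_le_min _
  · exact mul_le_of_le_one_left (Real.rpow_nonneg (abs_nonneg y) _) (Real.abs_sign_le_one y)

theorem integrable_resonanceKernel {α : ℝ} (hα : α ∈ Ioo 0 1) (ξ : ℝ) :
    Integrable (resonanceKernel α ξ) := by
  have hmeas : AEStronglyMeasurable (resonanceKernel α ξ) := by
    unfold resonanceKernel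
    have := Real.measurable_sign
    fun_prop
  refine (integrableOn_Ioi_min_mul_rpow (s := -1 - α) ⟨by linarith [hα.2], by linarith [hα.1]⟩
    zero_le_two (abs_nonneg ξ)).integrable_comp_abs.mono' hmeas
    (Filter.Eventually.of_forall (norm_resonanceKernel_le α ξ))

theorem resonanceKernel_add_comp_neg {y : ℝ} (hy : 0 < y) (α ξ : ℝ) :
    resonanceKernel α ξ y + resonanceKernel α ξ (-y)
      = 2 * I * ((y ^ (-1 - α) * Real.sin (ξ * y) : ℝ) : ℂ) := by
  simp only [resonanceKernel, Real.sign_neg, abs_neg, Real.sign_of_pos hy, abs_of_pos hy]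
  push_cast
  rw [Complex.sin]
  ring_nf
  rw [I_sq]
  ring

theorem integral_Ioi_rpow_mul_comp_mul_left (s : ℝ) (f : ℝ → ℝ) {a : ℝ} (ha : 0 < a) :
    ∫ t in Ioi 0, t ^ s * f (a * t) = a ^ (-1 - s) * ∫ t in Ioi 0, t ^ s * f t := by
  have hscale := integral_comp_mul_left_Ioi (fun t => t ^ s * f t) 0 ha
  rw [mul_zero, smul_eq_mul] at hscale
  have hpull :
      ∫ t in Ioi 0, (a * t) ^ s * f (a * t) = a ^ s * ∫ t in Ioi 0, t ^ s * f (a * t) := by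
    rw [← integral_const_mul]
    refine setIntegral_congr_fun measurableSet_Ioi fun t ht => ?_
    rw [Real.mul_rpow ha.le (le_of_lt ht), mul_assoc]
  have hpow : a ^ (-1 - s) = a⁻¹ * (a ^ s)⁻¹ := by
    rw [sub_eq_add_neg, Real.rpow_add ha, Real.rpow_neg_one, Real.rpow_neg ha.le]
  rw [hpull] at hscale
  rw [hpow, mul_assoc, mul_left_comm, ← hscale, inv_mul_cancel_left₀ (by positivity)]

theorem integral_Ioi_rpow_mul_sin_mul (s ξ : ℝ) :
    ∫ t in Ioi 0, t ^ s * Real.sin (ξ * t)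
      = Real.sign ξ * |ξ| ^ (-1 - s) * ∫ t in Ioi 0, t ^ s * Real.sin t := by
  rcases lt_trichotomy ξ 0 with hξ | rfl | hξ
  · have hodd : ∀ t, t ^ s * Real.sin (ξ * t) = -(t ^ s * Real.sin (-ξ * t)) := fun t => by
      rw [neg_mul, Real.sin_neg, mul_neg, neg_neg]
    simp_rw [hodd]
    rw [integral_neg, integral_Ioi_rpow_mul_comp_mul_left s _ (neg_pos.mpr hξ),
      Real.sign_of_neg hξ, abs_of_neg hξ]
    ring
  · simp
  · rw [integral_Ioi_rpow_mul_comp_mul_left s _ hξ, Real.sign_of_pos hξ, abs_of_pos hξ, one_mul]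

theorem integral_resonanceKernel {α : ℝ} (hα : α ∈ Ioo 0 1) (ξ : ℝ) :
    ∫ y, resonanceKernel α ξ y
      = 2 * I * ((∫ u in Ioi (0 : ℝ), u ^ (-1 - α) * Real.sin u : ℝ) : ℂ)
          * ((Real.sign ξ * |ξ| ^ α : ℝ) : ℂ) := by
  rw [integral_eq_integral_Ioi_add_comp_neg (integrable_resonanceKernel hα ξ),
    setIntegral_congr_fun measurableSet_Ioi fun y hy => resonanceKernel_add_comp_neg hy α ξ,
    integral_const_mul, integral_complex_ofReal, integral_Ioi_rpow_mul_sin_mul,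
    show -1 - (-1 - α) = α by ring]
  push_cast
  ring

theorem resonanceKernel_add_sub_sub (α ξ₁ ξ₂ y : ℝ) :
    resonanceKernel α (ξ₁ + ξ₂) y - resonanceKernel α ξ₁ y - resonanceKernel α ξ₂ y
      = ((Real.sign y * |y| ^ (1 - α) : ℝ) : ℂ)
          * ((cexp (I * ξ₁ * y) - 1) * (cexp (I * ξ₂ * y) - 1) / (y : ℂ) ^ 2) := by
  rcases eq_or_ne y 0 with rfl | hy
  · simp [resonanceKernel]
  have hpow : |y| ^ (1 - α) = |y| ^ (-1 - α) * y ^ 2 := by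
    rw [← sq_abs y, ← Real.rpow_two, ← Real.rpow_add (abs_pos.mpr hy)]
    ring_nf
  have hexp : cexp (I * ↑(ξ₁ + ξ₂) * y) = cexp (I * ξ₁ * y) * cexp (I * ξ₂ * y) := by
    rw [← Complex.exp_add]
    push_cast
    ring_nf
  have hy' : (y : ℂ) ≠ 0 := ofReal_ne_zero.mpr hy
  rw [resonanceKernel, resonanceKernel, resonanceKernel, hexp, hpow]
  push_cast
  field_simp
  ring

/-- Resonance identity / null structure for the gSQG front equation. -/
theorem stmt_11 (α : ℝ) (hα : α ∈ Set.Ioo (0:ℝ) 1) (ξ₁ ξ₂ : ℝ)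
    (S : ℝ) (hS : S = ∫ u in Set.Ioi (0:ℝ), u ^ (-1 - α) * Real.sin u)
    (m : ℝ → ℝ) (hm : ∀ ξ : ℝ, m ξ = Real.sign ξ * |ξ| ^ α) :
    (∫ y : ℝ, (↑(Real.sign y * |y| ^ (1 - α)) : ℂ) *
        ((Complex.exp (Complex.I * (ξ₁ : ℂ) * (y : ℂ)) - 1) *
          (Complex.exp (Complex.I * (ξ₂ : ℂ) * (y : ℂ)) - 1) / (y : ℂ) ^ 2))
      = 2 * Complex.I * (S : ℂ) * ((m (ξ₁ + ξ₂) : ℂ) - (m ξ₁ : ℂ) - (m ξ₂ : ℂ)) := by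
  have hK := integrable_resonanceKernel hα
  have hK₁₂ : Integrable fun y => resonanceKernel α (ξ₁ + ξ₂) y - resonanceKernel α ξ₁ y :=
    (hK _).sub (hK _)
  simp_rw [← resonanceKernel_add_sub_sub]
  rw [integral_sub hK₁₂ (hK _), integral_sub (hK _) (hK _),
    integral_resonanceKernel hα, integral_resonanceKernel hα, integral_resonanceKernel hα,
    hm, hm, hm, hS]
  ring
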